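/- Under the same hypotheses (μ weakly unimodal, r > 1, (q_n) the Gersho quantizer sequence, I ⊆ interior of supp μ compact, J_{n,I} ≠ ∅ for n ≥ m), define ε₃(n) = max{ | ∫_{q_n⁻¹(a)} h^{1/(1+r)} dλ − diam(q_n⁻¹(a)) · h(a)^{1/(1+r)} | : a ∈ J_{n,I} }. Then n₁^I(n) · ε₃(n) → 0 as n → ∞, and moreover limsup_{n→∞} ε₃(n) / min{diam(q_n⁻¹(a)) : a ∈ J_{n,I}} = 0. -/

import Mathlib

open MeasureTheory Set Filter Topology
open scoped ENNReal NNReal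

/-- The distortion (quantization error) of order `r` of a quantizer `q` for `μ`,
as an extended nonnegative real: `∫ |x - q x|^r dμ`. -/
noncomputable def distortionE (μ : Measure ℝ) (q : ℝ → ℝ) (r : ℝ) : ℝ≥0∞ :=
  ∫⁻ x, ENNReal.ofReal (|x - q x| ^ r) ∂μ

/-- The `r`-th moment of `μ` on the set `s` about the point `a`:
`∫_s |x - a|^r dμ`. -/
noncomputable def cellMoment (μ : Measure ℝ) (r : ℝ) (s : Set ℝ) (a : ℝ) : ℝ≥0∞ :=
  ∫⁻ x in s, ENNReal.ofReal (|x - a| ^ r) ∂μ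

/-- A (scalar) quantizer: a Borel measurable map `ℝ → ℝ` with countable image. -/
def IsQuantizer (q : ℝ → ℝ) : Prop :=
  Measurable q ∧ (Set.range q).Countable

/-- An `n`-level Gersho quantizer of order `r` for `μ`:
(G1) exactly `n` codepoints; (G2) every codecell is an interval;
(G3) every codepoint is optimal for its own codecell;
(G4) every codecell contributes `D(μ,q,r)/n` to the distortion. -/
def IsGersho (μ : Measure ℝ) (r : ℝ) (n : ℕ) (q : ℝ → ℝ) : Prop :=
  IsQuantizer q ∧
  (Set.range q).encard = n ∧
  (∀ a ∈ Set.range q, (q ⁻¹' {a}).OrdConnected) ∧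
  (∀ a ∈ Set.range q, ∀ b : ℝ, cellMoment μ r (q ⁻¹' {a}) a ≤ cellMoment μ r (q ⁻¹' {a}) b) ∧
  (∀ a ∈ Set.range q, cellMoment μ r (q ⁻¹' {a}) a = distortionE μ q r / (n : ℝ≥0∞))

/-- The (topological) support of a Borel measure on `ℝ`. -/
def msupp (μ : Measure ℝ) : Set ℝ := {x | ∀ U ∈ nhds x, 0 < μ U}

/-- A probability density `h` is weakly unimodal if it is continuous on its support and
there is `l₀ > 0` such that `{x | h x ≥ l}` is a compact interval for every `l ∈ (0, l₀)`. -/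
def WeaklyUnimodal (h : ℝ → ℝ) : Prop :=
  ContinuousOn h (tsupport h) ∧
  ∃ l₀ : ℝ, 0 < l₀ ∧ ∀ l : ℝ, 0 < l → l < l₀ →
    IsCompact {x | l ≤ h x} ∧ ({x | l ≤ h x}).OrdConnected

/-- The constant `Q(r) = 2^{-r} (1+r)^{-1}`. -/
noncomputable def Qconst (r : ℝ) : ℝ := (2 : ℝ) ^ (-r) * (1 + r)⁻¹

/-- The optimal `n`-th Gersho quantization error for `μ` of order `r`. -/
noncomputable def gershoError (μ : Measure ℝ) (r : ℝ) (n : ℕ) : ℝ :=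
  (⨅ q ∈ {q : ℝ → ℝ | IsGersho μ r n q}, distortionE μ q r).toReal

/-- The optimal `n`-th quantization error for `μ` of order `r`. -/
noncomputable def optError (μ : Measure ℝ) (r : ℝ) (n : ℕ) : ℝ :=
  (⨅ q ∈ {q : ℝ → ℝ | IsQuantizer q ∧ (Set.range q).encard ≤ (n : ℕ∞)},
    distortionE μ q r).toReal

/-- The set `J = (a - b, ∞) ∩ (inf supp μ, sup supp μ)` (endpoints in the extended reals). -/
def Jset (μ : Measure ℝ) (a : EReal) (b : ℝ) : Set ℝ :=
  {z : ℝ | a - (b : EReal) < (z : EReal) ∧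
    sInf ((fun t : ℝ => (t : EReal)) '' msupp μ) < (z : EReal) ∧
    (z : EReal) < sSup ((fun t : ℝ => (t : EReal)) '' msupp μ)}

/-- `J_{n,I}`: the codepoints of `q n` whose codecell lies inside `I`. -/
def Jcells (q : ℕ → ℝ → ℝ) (I : Set ℝ) (n : ℕ) : Set ℝ :=
  {a ∈ Set.range (q n) | (q n) ⁻¹' {a} ⊆ I}

/-!
On `I = [u, v] ⊆ int supp μ` the density `h` is continuous and pinned between constants
`0 < c₁ ≤ h ≤ c₂`; positivity holds because the upper level sets of `h` are intervals.
Every Gersho cell carries the same moment `D_n / n`, and a cell `C ⊆ I` has moment comparable to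
`diam C ^ (1 + r)`. Hence all cells of `J_{n,I}` have comparable diameters, and since
`D_n ≤ ∫ |x|^r dμ` these diameters tend to `0` uniformly. An optimal codepoint lies in the convex
hull of its cell, so uniform continuity of `h ^ (1 / (1 + r))` on `I` makes every error term
`o(diam C)`. Finally the cells of `J_{n,I}` are disjoint subsets of `I`, so
`n₁ · min diam ≤ λ(I)`.
-/

theorem Set.OrdConnected.volume_eq_ofReal_diam {C : Set ℝ} (hC : C.OrdConnected)
    (hb : Bornology.IsBounded C) : volume C = ENNReal.ofReal (Metric.diam C) := by
  rcases C.eq_empty_or_nonempty with rfl | hne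
  · simp
  rw [Real.diam_eq hb]
  refine le_antisymm ((Real.volume_le_diam C).trans_eq (Real.ediam_eq hb)) ?_
  rw [← Real.volume_Ioo]
  exact measure_mono (IsConnected.Ioo_csInf_csSup_subset ⟨hne, hC.isPreconnected⟩
    hb.bddBelow hb.bddAbove)

theorem Set.OrdConnected.volume_real_eq_diam {C : Set ℝ} (hC : C.OrdConnected)
    (hb : Bornology.IsBounded C) : volume.real C = Metric.diam C := by
  rw [measureReal_def, hC.volume_eq_ofReal_diam hb, ENNReal.toReal_ofReal Metric.diam_nonneg]

/-- At least half of `(α, β)` lies at distance `≥ (β - α) / 4` from `b`. -/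
theorem le_setLIntegral_Ioo_abs_sub_rpow {r : ℝ} (hr : 0 ≤ r) {α β : ℝ} (hαβ : α ≤ β) (b : ℝ) :
    ENNReal.ofReal ((β - α) ^ (1 + r) / (2 * 4 ^ r)) ≤
      ∫⁻ x in Ioo α β, ENNReal.ofReal (|x - b| ^ r) := by
  set d := β - α
  have hd0 : 0 ≤ d := sub_nonneg.2 hαβ
  set S := Ioo α β \ Ioo (b - d / 4) (b + d / 4)
  have hS : ENNReal.ofReal (d / 2) ≤ volume S := by
    calc ENNReal.ofReal (d / 2)
        = volume (Ioo α β) - volume (Ioo (b - d / 4) (b + d / 4)) := by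
          rw [Real.volume_Ioo, Real.volume_Ioo, show b + d / 4 - (b - d / 4) = d / 2 by ring,
            ← ENNReal.ofReal_sub _ (by positivity)]
          congr 1
          linarith
      _ ≤ volume S := le_measure_sdiff
  calc ENNReal.ofReal (d ^ (1 + r) / (2 * 4 ^ r))
      = ENNReal.ofReal ((d / 4) ^ r) * ENNReal.ofReal (d / 2) := by
        rw [← ENNReal.ofReal_mul (by positivity), Real.div_rpow hd0 (by norm_num),
          Real.rpow_one_add' hd0 (by linarith)]
        congr 1
        ring
    _ ≤ ENNReal.ofReal ((d / 4) ^ r) * volume S := by gcongr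
    _ = ∫⁻ _ in S, ENNReal.ofReal ((d / 4) ^ r) := (setLIntegral_const _ _).symm
    _ ≤ ∫⁻ x in S, ENNReal.ofReal (|x - b| ^ r) := by
        refine setLIntegral_mono' (measurableSet_Ioo.diff measurableSet_Ioo) fun x hx => ?_
        have hx' : d / 4 ≤ |x - b| := by
          by_contra! hlt
          exact hx.2 ⟨by linarith [neg_abs_le (x - b)], by linarith [le_abs_self (x - b)]⟩
        gcongr
    _ ≤ ∫⁻ x in Ioo α β, ENNReal.ofReal (|x - b| ^ r) := lintegral_mono_set sdiff_subset

theorem le_rpow_inv_mul_of_mul_rpow_le {x y p c c' : ℝ} (hx : 0 ≤ x) (hy : 0 ≤ y) (hp : 0 < p)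
    (hc : 0 < c) (hc' : 0 ≤ c') (h : c * x ^ p ≤ c' * y ^ p) :
    x ≤ (c' / c) ^ p⁻¹ * y := by
  have hk : 0 ≤ c' / c := div_nonneg hc' hc.le
  rw [← Real.rpow_le_rpow_iff hx (by positivity) hp, Real.mul_rpow (by positivity) hy,
    Real.rpow_inv_rpow hk hp.ne', div_mul_eq_mul_div, le_div_iff₀ hc, mul_comm]
  exact h

theorem tendsto_nhds_zero_of_eventually_le_mul {f : ℕ → ℝ} (C : ℝ) (hf : ∀ n, 0 ≤ f n)
    (h : ∀ ε > 0, ∀ᶠ n in atTop, f n ≤ C * ε) : Tendsto f atTop (𝓝 0) := by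
  refine tendsto_order.2 ⟨fun b hb => .of_forall fun n => hb.trans_le (hf n), fun b hb => ?_⟩
  have hC : 0 < |C| + 1 := by positivity
  refine (h (b / (|C| + 1)) (div_pos hb hC)).mono fun n hn => hn.trans_lt ?_
  calc C * (b / (|C| + 1)) ≤ |C| * (b / (|C| + 1)) := by
        gcongr
        exact le_abs_self C
    _ < (|C| + 1) * (b / (|C| + 1)) := by gcongr; linarith
    _ = b := mul_div_cancel₀ b hC.ne'

theorem tendsto_ncard_mul_sSup_and_sSup_div_sInf {ι : Type*} {J : ℕ → Set ι}
    {d err : ℕ → ι → ℝ} {R L : ℝ} (hR : 0 < R)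
    (hd : ∀ n, ∀ i ∈ J n, 0 ≤ d n i) (herr : ∀ n, ∀ i ∈ J n, 0 ≤ err n i)
    (hratio : ∀ᶠ n in atTop, ∀ i ∈ J n, ∀ j ∈ J n, d n i ≤ R * d n j)
    (hrel : ∀ ε > 0, ∀ᶠ n in atTop, ∀ i ∈ J n, err n i ≤ ε * d n i)
    (hL : ∀ᶠ n in atTop, ((J n).ncard : ℝ) * sInf (d n '' J n) ≤ L) :
    Tendsto (fun n => ((J n).ncard : ℝ) * sSup (err n '' J n)) atTop (𝓝 0) ∧
      Tendsto (fun n => sSup (err n '' J n) / sInf (d n '' J n)) atTop (𝓝 0) := by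
  have hInf : ∀ n, 0 ≤ sInf (d n '' J n) := fun n =>
    Real.sInf_nonneg (by rintro _ ⟨i, hi, rfl⟩; exact hd n i hi)
  have hSup : ∀ n, 0 ≤ sSup (err n '' J n) := fun n =>
    Real.sSup_nonneg (by rintro _ ⟨i, hi, rfl⟩; exact herr n i hi)
  have key : ∀ ε > 0, ∀ᶠ n in atTop, sSup (err n '' J n) ≤ ε * R * sInf (d n '' J n) := by
    intro ε hε
    filter_upwards [hratio, hrel ε hε] with n hratio hrel
    refine Real.sSup_le ?_ (by have := hInf n; positivity)
    rintro _ ⟨i, hi, rfl⟩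
    have hdi : d n i ≤ R * sInf (d n '' J n) := by
      rw [← div_le_iff₀' hR]
      refine le_csInf ⟨_, i, hi, rfl⟩ ?_
      rintro _ ⟨j, hj, rfl⟩
      exact (div_le_iff₀' hR).2 (hratio i hi j hj)
    calc err n i ≤ ε * d n i := hrel i hi
      _ ≤ ε * (R * sInf (d n '' J n)) := by gcongr
      _ = ε * R * sInf (d n '' J n) := by ring
  constructor
  · refine tendsto_nhds_zero_of_eventually_le_mul (R * L)
      (fun n => by have := hSup n; positivity) fun ε hε => ?_
    filter_upwards [key ε hε, hL] with n hn hLn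
    calc ((J n).ncard : ℝ) * sSup (err n '' J n)
        ≤ (J n).ncard * (ε * R * sInf (d n '' J n)) := by gcongr
      _ = ε * R * ((J n).ncard * sInf (d n '' J n)) := by ring
      _ ≤ ε * R * L := by gcongr
      _ = R * L * ε := by ring
  · refine tendsto_nhds_zero_of_eventually_le_mul R
      (fun n => div_nonneg (hSup n) (hInf n)) fun ε hε => ?_
    filter_upwards [key ε hε] with n hn
    exact (div_le_of_le_mul₀ (hInf n) (by positivity) hn).trans_eq (mul_comm ε R)

section Measure

variable {α : Type*} [MeasurableSpace α] {μ : Measure α}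

theorem abs_setIntegral_sub_measureReal_mul_le {g : α → ℝ} {s : Set α} {c ε : ℝ} (hs : μ s ≠ ∞)
    (hg : IntegrableOn g s μ) (hgc : ∀ x ∈ s, |g x - c| ≤ ε) :
    |∫ x in s, g x ∂μ - μ.real s * c| ≤ ε * μ.real s := by
  have := norm_setIntegral_le_of_norm_le_const hs.lt_top (f := fun x => g x - c) hgc
  rwa [integral_sub hg (integrableOn_const hs), setIntegral_const, smul_eq_mul,
    Real.norm_eq_abs] at this

theorem ncard_mul_sInf_measureReal_le {ι : Type*} {J : Set ι} {s : ι → Set α} {K : Set α}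
    (hK : μ K ≠ ∞) (hdisj : J.PairwiseDisjoint s) (hm : ∀ i ∈ J, MeasurableSet (s i))
    (hsK : ∀ i ∈ J, s i ⊆ K) :
    (J.ncard : ℝ) * sInf ((fun i => μ.real (s i)) '' J) ≤ μ.real K := by
  rcases J.finite_or_infinite with hJ | hJ
  · have hmem : ∀ i ∈ hJ.toFinset, i ∈ J := fun i hi => hJ.mem_toFinset.1 hi
    calc (J.ncard : ℝ) * sInf ((fun i => μ.real (s i)) '' J)
        = ∑ _i ∈ hJ.toFinset, sInf ((fun i => μ.real (s i)) '' J) := by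
          rw [Finset.sum_const, nsmul_eq_mul, ncard_eq_toFinset_card J hJ]
      _ ≤ ∑ i ∈ hJ.toFinset, μ.real (s i) :=
          Finset.sum_le_sum fun i hi => csInf_le
            ⟨0, by rintro _ ⟨j, -, rfl⟩; exact measureReal_nonneg⟩ ⟨i, hmem i hi, rfl⟩
      _ = μ.real (⋃ i ∈ hJ.toFinset, s i) :=
          (measureReal_biUnion_finset (by rwa [hJ.coe_toFinset]) (fun i hi => hm i (hmem i hi))
            fun i hi => ne_top_of_le_ne_top hK (measure_mono (hsK i (hmem i hi)))).symm
      _ ≤ μ.real K := measureReal_mono (iUnion₂_subset fun i hi => hsK i (hmem i hi)) hK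
  · rw [hJ.ncard, Nat.cast_zero, zero_mul]
    exact measureReal_nonneg

theorem restrict_withDensity_le_smul_restrict {f : α → ℝ≥0∞} {s : Set α} (hs : MeasurableSet s)
    {c : ℝ≥0∞} (hf : ∀ x ∈ s, f x ≤ c) : (μ.withDensity f).restrict s ≤ c • μ.restrict s := by
  rw [restrict_withDensity hs, ← withDensity_const]
  exact withDensity_mono ((ae_restrict_iff' hs).2 (.of_forall hf))

theorem smul_restrict_le_restrict_withDensity {f : α → ℝ≥0∞} {s : Set α} (hs : MeasurableSet s)
    {c : ℝ≥0∞} (hf : ∀ x ∈ s, c ≤ f x) : c • μ.restrict s ≤ (μ.withDensity f).restrict s := by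
  rw [restrict_withDensity hs, ← withDensity_const]
  exact withDensity_mono ((ae_restrict_iff' hs).2 (.of_forall hf))

end Measure

section Density

variable {h : ℝ → ℝ}

theorem exists_pos_of_mem_msupp_withDensity {x : ℝ}
    (hx : x ∈ msupp (volume.withDensity fun y => ENNReal.ofReal (h y))) {U : Set ℝ}
    (hU : U ∈ 𝓝 x) : ∃ y ∈ U, 0 < h y := by
  by_contra! hle
  obtain ⟨t, htU, ht, hxt⟩ := mem_nhds_iff.1 hU
  have := hx t (ht.mem_nhds hxt)
  rw [withDensity_apply _ ht.measurableSet, setLIntegral_congr_fun ht.measurableSet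
    (g := fun _ => 0) fun y hy => ENNReal.ofReal_eq_zero.2 (hle y (htU hy)),
    lintegral_zero] at this
  exact this.false

theorem WeaklyUnimodal.pos_of_mem_Icc (hwu : WeaklyUnimodal h) {y₁ y₂ x : ℝ}
    (hx : x ∈ Icc y₁ y₂) (h₁ : 0 < h y₁) (h₂ : 0 < h y₂) : 0 < h x := by
  obtain ⟨l₀, hl₀, hlev⟩ := hwu.2
  set l := min (min (h y₁) (h y₂)) (l₀ / 2)
  have hl : 0 < l := lt_min (lt_min h₁ h₂) (half_pos hl₀)
  have hll₀ : l < l₀ := (min_le_right _ _).trans_lt (half_lt_self hl₀)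
  have hmem₁ : l ≤ h y₁ := (min_le_left _ _).trans (min_le_left _ _)
  have hmem₂ : l ≤ h y₂ := (min_le_left _ _).trans (min_le_right _ _)
  exact hl.trans_le ((hlev l hl hll₀).2.out (x := y₁) (y := y₂) hmem₁ hmem₂ hx)

theorem WeaklyUnimodal.pos_of_mem_interior_msupp (hwu : WeaklyUnimodal h) {x : ℝ}
    (hx : x ∈ interior (msupp (volume.withDensity fun y => ENNReal.ofReal (h y)))) :
    0 < h x := by
  obtain ⟨ε, hε, hball⟩ := Metric.isOpen_iff.1 isOpen_interior x hx
  have hmem : ∀ y, |y - x| < ε →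
      y ∈ msupp (volume.withDensity fun y => ENNReal.ofReal (h y)) := fun y hy =>
    interior_subset (hball (by rwa [Metric.mem_ball, Real.dist_eq]))
  obtain ⟨y₁, hy₁, h₁⟩ := exists_pos_of_mem_msupp_withDensity
    (hmem (x - ε / 2) (by rw [abs_lt]; constructor <;> linarith))
    (Iio_mem_nhds (show x - ε / 2 < x by linarith))
  obtain ⟨y₂, hy₂, h₂⟩ := exists_pos_of_mem_msupp_withDensity
    (hmem (x + ε / 2) (by rw [abs_lt]; constructor <;> linarith))
    (Ioi_mem_nhds (show x < x + ε / 2 by linarith))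
  exact hwu.pos_of_mem_Icc ⟨le_of_lt hy₁, le_of_lt hy₂⟩ h₁ h₂

theorem WeaklyUnimodal.continuousOn_interior_msupp (hwu : WeaklyUnimodal h) :
    ContinuousOn h (interior (msupp (volume.withDensity fun y => ENNReal.ofReal (h y)))) :=
  hwu.1.mono fun _ hx => subset_tsupport h (hwu.pos_of_mem_interior_msupp hx).ne'

end Density

section CellMoment

variable {μ : Measure ℝ} {r : ℝ} {C : Set ℝ}

theorem cellMoment_le_mul_measure (hr : 0 ≤ r) (hC : MeasurableSet C) {b d : ℝ}
    (hb : ∀ x ∈ C, |x - b| ≤ d) : cellMoment μ r C b ≤ ENNReal.ofReal (d ^ r) * μ C := by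
  rw [cellMoment, ← setLIntegral_const]
  exact setLIntegral_mono' hC fun x hx =>
    ENNReal.ofReal_le_ofReal (Real.rpow_le_rpow (abs_nonneg _) (hb x hx) hr)

theorem cellMoment_lt_cellMoment (hr : 0 < r) (hC : MeasurableSet C) (hμC : μ C ≠ 0) {a b : ℝ}
    (hb : cellMoment μ r C b ≠ ∞) (hlt : ∀ x ∈ C, |x - b| < |x - a|) :
    cellMoment μ r C b < cellMoment μ r C a := by
  refine lintegral_strict_mono (by rwa [Ne, Measure.restrict_eq_zero]) (by fun_prop) hb
    ((ae_restrict_iff' hC).2 (.of_forall fun x hx => ?_))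
  have hlt' := Real.rpow_lt_rpow (abs_nonneg _) (hlt x hx) hr
  exact ENNReal.ofReal_lt_ofReal_iff'.2
    ⟨hlt', (Real.rpow_nonneg (abs_nonneg _) r).trans_lt hlt'⟩

/-- Moving the point to the nearer endpoint would strictly decrease the moment. -/
theorem mem_Icc_of_forall_cellMoment_le [IsFiniteMeasure μ] (hr : 0 < r) (hC : MeasurableSet C)
    (hμC : μ C ≠ 0) {α β a : ℝ} (hCαβ : C ⊆ Icc α β)
    (hmin : ∀ b, cellMoment μ r C a ≤ cellMoment μ r C b) : a ∈ Icc α β := by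
  obtain ⟨x₀, hx₀⟩ := nonempty_of_measure_ne_zero hμC
  have hαβ : α ≤ β := (hCαβ hx₀).1.trans (hCαβ hx₀).2
  have hfin : ∀ b ∈ Icc α β, cellMoment μ r C b ≠ ∞ := fun b hb =>
    ne_top_of_le_ne_top (by finiteness) <| cellMoment_le_mul_measure hr.le hC (d := β - α)
      fun x hx => abs_sub_le_iff.2
        ⟨by linarith [(hCαβ hx).2, hb.1], by linarith [(hCαβ hx).1, hb.2]⟩
  by_contra hout
  rw [mem_Icc, not_and_or, not_le, not_le] at hout
  rcases hout with ha | ha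
  · refine (hmin α).not_gt (cellMoment_lt_cellMoment hr hC hμC (hfin α ⟨le_rfl, hαβ⟩)
      fun x hx => ?_)
    have := (hCαβ hx).1
    rw [abs_of_nonneg (by linarith), abs_of_nonneg (by linarith)]
    linarith
  · refine (hmin β).not_gt (cellMoment_lt_cellMoment hr hC hμC (hfin β ⟨hαβ, le_rfl⟩)
      fun x hx => ?_)
    have := (hCαβ hx).2
    rw [abs_of_nonpos (by linarith), abs_of_nonpos (by linarith)]
    linarith

variable {h : ℝ → ℝ}

theorem le_cellMoment_withDensity (hr : 0 ≤ r) (hC : C.OrdConnected) (hCm : MeasurableSet C)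
    (hb : Bornology.IsBounded C) {c : ℝ} (hc : ∀ x ∈ C, c ≤ h x) (a : ℝ) :
    ENNReal.ofReal (c * Metric.diam C ^ (1 + r) / (2 * 4 ^ r)) ≤
      cellMoment (volume.withDensity fun x => ENNReal.ofReal (h x)) r C a := by
  have hIoo : Ioo (sInf C) (sSup C) ⊆ C := by
    rcases C.eq_empty_or_nonempty with rfl | hne
    · simp
    exact IsConnected.Ioo_csInf_csSup_subset ⟨hne, hC.isPreconnected⟩ hb.bddBelow hb.bddAbove
  have hle := Real.sInf_le_sSup C hb.bddBelow hb.bddAbove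
  rw [Real.diam_eq hb, mul_div_assoc,
    ENNReal.ofReal_mul' (div_nonneg (Real.rpow_nonneg (sub_nonneg.2 hle) _) (by positivity))]
  calc ENNReal.ofReal c * ENNReal.ofReal ((sSup C - sInf C) ^ (1 + r) / (2 * 4 ^ r))
      ≤ ENNReal.ofReal c * ∫⁻ x in Ioo (sInf C) (sSup C), ENNReal.ofReal (|x - a| ^ r) := by
        gcongr
        exact le_setLIntegral_Ioo_abs_sub_rpow hr hle a
    _ ≤ ENNReal.ofReal c * ∫⁻ x in C, ENNReal.ofReal (|x - a| ^ r) := by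
        gcongr
    _ = ∫⁻ x, ENNReal.ofReal (|x - a| ^ r) ∂(ENNReal.ofReal c • volume.restrict C) :=
        by rw [lintegral_smul_measure, smul_eq_mul]
    _ ≤ cellMoment (volume.withDensity fun x => ENNReal.ofReal (h x)) r C a :=
        lintegral_mono' (smul_restrict_le_restrict_withDensity hCm fun x hx =>
          ENNReal.ofReal_le_ofReal (hc x hx)) le_rfl

theorem cellMoment_withDensity_le (hr : 0 ≤ r) (hC : C.OrdConnected) (hCm : MeasurableSet C)
    (hb : Bornology.IsBounded C) {c : ℝ} (hc : ∀ x ∈ C, h x ≤ c) {a : ℝ}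
    (ha : ∀ x ∈ C, |x - a| ≤ Metric.diam C) :
    cellMoment (volume.withDensity fun x => ENNReal.ofReal (h x)) r C a ≤
      ENNReal.ofReal (c * Metric.diam C ^ (1 + r)) := by
  have hμC : (volume.withDensity fun x => ENNReal.ofReal (h x)) C ≤
      ENNReal.ofReal c * ENNReal.ofReal (Metric.diam C) := by
    have := restrict_withDensity_le_smul_restrict (μ := volume) hCm
      (fun x hx => ENNReal.ofReal_le_ofReal (hc x hx)) univ
    rwa [Measure.restrict_apply_univ, Measure.smul_apply, Measure.restrict_apply_univ,
      hC.volume_eq_ofReal_diam hb, smul_eq_mul] at this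
  calc cellMoment (volume.withDensity fun x => ENNReal.ofReal (h x)) r C a
      ≤ ENNReal.ofReal (Metric.diam C ^ r) *
          (ENNReal.ofReal c * ENNReal.ofReal (Metric.diam C)) :=
        (cellMoment_le_mul_measure hr hCm ha).trans (by gcongr)
    _ = ENNReal.ofReal (c * Metric.diam C ^ (1 + r)) := by
        rw [Real.rpow_one_add' Metric.diam_nonneg (by linarith),
          ENNReal.ofReal_mul' (by positivity), ENNReal.ofReal_mul Metric.diam_nonneg]
        ring

end CellMoment

section Quantizer

variable {μ : Measure ℝ} {r : ℝ} {n : ℕ} {q : ℝ → ℝ}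

theorem IsQuantizer.lintegral_eq_tsum (hq : IsQuantizer q) (F : ℝ → ℝ≥0∞) :
    ∫⁻ x, F x ∂μ = ∑' a : range q, ∫⁻ x in q ⁻¹' {(a : ℝ)}, F x ∂μ := by
  rw [← lintegral_biUnion hq.2 (fun a _ => hq.1 (measurableSet_singleton a))
    (pairwiseDisjoint_fiber q _), biUnion_preimage_singleton, preimage_range,
    Measure.restrict_univ]

theorem IsQuantizer.distortionE_le (hq : IsQuantizer q)
    (hmin : ∀ a ∈ range q, cellMoment μ r (q ⁻¹' {a}) a ≤ cellMoment μ r (q ⁻¹' {a}) 0) :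
    distortionE μ q r ≤ ∫⁻ x, ENNReal.ofReal (|x| ^ r) ∂μ := by
  rw [distortionE, hq.lintegral_eq_tsum, hq.lintegral_eq_tsum]
  refine ENNReal.tsum_le_tsum fun a => ?_
  calc ∫⁻ x in q ⁻¹' {(a : ℝ)}, ENNReal.ofReal (|x - q x| ^ r) ∂μ
      = cellMoment μ r (q ⁻¹' {(a : ℝ)}) a :=
        setLIntegral_congr_fun (hq.1 (measurableSet_singleton _)) fun x (hx : q x = a) => by
          rw [hx]
    _ ≤ cellMoment μ r (q ⁻¹' {(a : ℝ)}) 0 := hmin a a.2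
    _ = ∫⁻ x in q ⁻¹' {(a : ℝ)}, ENNReal.ofReal (|x| ^ r) ∂μ := by
        simp only [cellMoment, sub_zero]

theorem IsQuantizer.distortionE_ne_zero [NullSingletonClass μ] [NeZero μ] (hq : IsQuantizer q) :
    distortionE μ q r ≠ 0 := by
  intro h0
  have hmeas : Measurable fun x => ENNReal.ofReal (|x - q x| ^ r) := by
    have := hq.1
    fun_prop
  have hfalse : ∀ᵐ x ∂μ, False := by
    filter_upwards [(lintegral_eq_zero_iff hmeas).1 h0, hq.2.ae_notMem μ] with x hx hxq
    refine hxq ⟨x, by_contra fun hne => ?_⟩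
    exact (Real.rpow_pos_of_pos (abs_pos.2 (sub_ne_zero.2 (Ne.symm hne))) r).not_ge
      (ENNReal.ofReal_eq_zero.1 hx)
  exact NeZero.ne μ (ae_eq_bot.1 (eventually_false_iff_eq_bot.1 hfalse))

theorem IsGersho.measure_cell_ne_zero [NullSingletonClass μ] [NeZero μ] (hq : IsGersho μ r n q)
    {a : ℝ} (ha : a ∈ range q) : μ (q ⁻¹' {a}) ≠ 0 := by
  intro h0
  have hD : distortionE μ q r / n = 0 := by
    rw [← hq.2.2.2.2 a ha, cellMoment, Measure.restrict_eq_zero.2 h0, lintegral_zero_measure]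
  rcases ENNReal.div_eq_zero_iff.1 hD with hD | hn
  · exact hq.1.distortionE_ne_zero hD
  · exact ENNReal.natCast_ne_top n hn

theorem IsGersho.mem_Icc_of_cell_subset [IsFiniteMeasure μ] [NullSingletonClass μ] [NeZero μ]
    (hq : IsGersho μ r n q) (hr : 0 < r) {α β a : ℝ} (ha : a ∈ range q)
    (hC : q ⁻¹' {a} ⊆ Icc α β) : a ∈ Icc α β :=
  mem_Icc_of_forall_cellMoment_le hr (hq.1.1 (measurableSet_singleton a))
    (hq.measure_cell_ne_zero ha) hC (hq.2.2.2.1 a ha)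

theorem IsGersho.abs_sub_le_diam_cell [IsFiniteMeasure μ] [NullSingletonClass μ] [NeZero μ]
    (hq : IsGersho μ r n q) (hr : 0 < r) {a : ℝ} (ha : a ∈ range q)
    (hb : Bornology.IsBounded (q ⁻¹' {a})) {x : ℝ} (hx : x ∈ q ⁻¹' {a}) :
    |x - a| ≤ Metric.diam (q ⁻¹' {a}) := by
  have hCI := subset_Icc_csInf_csSup hb.bddBelow hb.bddAbove
  have haI := hq.mem_Icc_of_cell_subset hr ha hCI
  rw [Real.diam_eq hb, abs_sub_le_iff]
  constructor <;> linarith [(hCI hx).1, (hCI hx).2, haI.1, haI.2]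

theorem IsGersho.le_distortionE_div {h : ℝ → ℝ} {u v c : ℝ}
    (hμ : μ = volume.withDensity fun x => ENNReal.ofReal (h x)) (hq : IsGersho μ r n q)
    (hr : 0 ≤ r) (hh : ∀ x ∈ Icc u v, c ≤ h x) {a : ℝ} (ha : a ∈ range q)
    (hC : q ⁻¹' {a} ⊆ Icc u v) :
    ENNReal.ofReal (c * Metric.diam (q ⁻¹' {a}) ^ (1 + r) / (2 * 4 ^ r)) ≤
      distortionE μ q r / n := by
  subst hμ
  rw [← hq.2.2.2.2 a ha]
  exact le_cellMoment_withDensity hr (hq.2.2.1 a ha) (hq.1.1 (measurableSet_singleton a))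
    ((Metric.isBounded_Icc u v).subset hC) (fun x hx => hh x (hC hx)) a

theorem IsGersho.distortionE_div_le {h : ℝ → ℝ} {u v c : ℝ} [IsFiniteMeasure μ] [NeZero μ]
    (hμ : μ = volume.withDensity fun x => ENNReal.ofReal (h x)) (hq : IsGersho μ r n q)
    (hr : 0 < r) (hh : ∀ x ∈ Icc u v, h x ≤ c) {a : ℝ} (ha : a ∈ range q)
    (hC : q ⁻¹' {a} ⊆ Icc u v) :
    distortionE μ q r / n ≤ ENNReal.ofReal (c * Metric.diam (q ⁻¹' {a}) ^ (1 + r)) := by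
  subst hμ
  have hb : Bornology.IsBounded (q ⁻¹' {a}) := (Metric.isBounded_Icc u v).subset hC
  rw [← hq.2.2.2.2 a ha]
  exact cellMoment_withDensity_le hr.le (hq.2.2.1 a ha) (hq.1.1 (measurableSet_singleton a)) hb
    (fun x hx => hh x (hC hx)) fun x hx => hq.abs_sub_le_diam_cell hr ha hb hx

end Quantizer

section GershoSequence

variable {μ : Measure ℝ} {r : ℝ} {h : ℝ → ℝ} {q : ℕ → ℝ → ℝ} {u v c₁ c₂ : ℝ}

theorem Jcells_diam_le_mul_diam [IsFiniteMeasure μ] [NeZero μ]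
    (hμ : μ = volume.withDensity fun x => ENNReal.ofReal (h x)) {n : ℕ}
    (hq : IsGersho μ r n (q n)) (hr : 0 < r) (hc₁ : 0 < c₁) (hc₂ : 0 ≤ c₂)
    (hh₁ : ∀ x ∈ Icc u v, c₁ ≤ h x) (hh₂ : ∀ x ∈ Icc u v, h x ≤ c₂) {a b : ℝ}
    (ha : a ∈ Jcells q (Icc u v) n) (hb : b ∈ Jcells q (Icc u v) n) :
    Metric.diam (q n ⁻¹' {a}) ≤
      (c₂ / (c₁ / (2 * 4 ^ r))) ^ (1 + r)⁻¹ * Metric.diam (q n ⁻¹' {b}) := by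
  have hle := (hq.le_distortionE_div hμ hr.le hh₁ ha.1 ha.2).trans
    (hq.distortionE_div_le hμ hr hh₂ hb.1 hb.2)
  rw [ENNReal.ofReal_le_ofReal_iff (by positivity), mul_div_right_comm] at hle
  exact le_rpow_inv_mul_of_mul_rpow_le Metric.diam_nonneg Metric.diam_nonneg (by linarith)
    (by positivity) hc₂ hle

theorem eventually_forall_Jcells_diam_le
    (hμ : μ = volume.withDensity fun x => ENNReal.ofReal (h x))
    (hq : ∀ n, 0 < n → IsGersho μ r n (q n)) (hr : 0 < r) (hc₁ : 0 < c₁)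
    (hh₁ : ∀ x ∈ Icc u v, c₁ ≤ h x) (hmom : ∫⁻ x, ENNReal.ofReal (|x| ^ r) ∂μ ≠ ∞) {δ : ℝ}
    (hδ : 0 < δ) :
    ∀ᶠ n in atTop, ∀ a ∈ Jcells q (Icc u v) n, Metric.diam (q n ⁻¹' {a}) ≤ δ := by
  set M := (∫⁻ x, ENNReal.ofReal (|x| ^ r) ∂μ).toReal
  have hκ : 0 < c₁ / (2 * 4 ^ r) := by positivity
  filter_upwards [(tendsto_const_div_atTop_nhds_zero_nat M).eventually
    (gt_mem_nhds (show 0 < c₁ / (2 * 4 ^ r) * δ ^ (1 + r) by positivity)),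
    eventually_gt_atTop 0] with n hMn hn a ha
  have hD : distortionE μ (q n) r / n ≤ ENNReal.ofReal (M / n) := by
    rw [ENNReal.ofReal_div_of_pos (Nat.cast_pos.2 hn), ENNReal.ofReal_toReal hmom,
      ENNReal.ofReal_natCast]
    exact ENNReal.div_le_div_right
      ((hq n hn).1.distortionE_le fun b hb => (hq n hn).2.2.2.1 b hb 0) _
  have hle := ((hq n hn).le_distortionE_div hμ hr.le hh₁ ha.1 ha.2).trans hD
  rw [ENNReal.ofReal_le_ofReal_iff (by positivity), mul_div_right_comm] at hle
  have hpow := le_of_mul_le_mul_left (hle.trans hMn.le) hκ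
  exact (Real.rpow_le_rpow_iff Metric.diam_nonneg hδ.le (by linarith)).1 hpow

theorem eventually_forall_Jcells_abs_setIntegral_sub_le [IsFiniteMeasure μ]
    [NullSingletonClass μ] [NeZero μ] (hq : ∀ n, 0 < n → IsGersho μ r n (q n)) (hr : 0 < r)
    {g : ℝ → ℝ} (hg : ContinuousOn g (Icc u v))
    (hsmall : ∀ δ > 0, ∀ᶠ n in atTop,
      ∀ a ∈ Jcells q (Icc u v) n, Metric.diam (q n ⁻¹' {a}) ≤ δ)
    {ε : ℝ} (hε : 0 < ε) :
    ∀ᶠ n in atTop, ∀ a ∈ Jcells q (Icc u v) n,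
      |(∫ x in q n ⁻¹' {a}, g x) - Metric.diam (q n ⁻¹' {a}) * g a| ≤
        ε * Metric.diam (q n ⁻¹' {a}) := by
  obtain ⟨δ, hδ, hgδ⟩ := Metric.uniformContinuousOn_iff_le.1
    (isCompact_Icc.uniformContinuousOn_of_continuous hg) ε hε
  filter_upwards [hsmall δ hδ, eventually_gt_atTop 0] with n hdiam hn a ha
  have hb : Bornology.IsBounded (q n ⁻¹' {a}) := (Metric.isBounded_Icc u v).subset ha.2
  have haK := (hq n hn).mem_Icc_of_cell_subset hr ha.1 ha.2
  rw [← ((hq n hn).2.2.1 a ha.1).volume_real_eq_diam hb]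
  refine abs_setIntegral_sub_measureReal_mul_le hb.measure_lt_top.ne
    ((hg.integrableOn_compact isCompact_Icc).mono_set ha.2) fun x hx => ?_
  have hxa : |x - a| ≤ δ := ((hq n hn).abs_sub_le_diam_cell hr ha.1 hb hx).trans (hdiam a ha)
  simpa only [Real.dist_eq] using hgδ x (ha.2 hx) a haK (by rwa [Real.dist_eq])

theorem Jcells_ncard_mul_sInf_diam_le {n : ℕ} (hq : IsGersho μ r n (q n)) :
    ((Jcells q (Icc u v) n).ncard : ℝ) *
        sInf ((fun a => Metric.diam (q n ⁻¹' {a})) '' Jcells q (Icc u v) n) ≤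
      volume.real (Icc u v) := by
  rw [image_congr fun a ha => ((hq.2.2.1 a ha.1).volume_real_eq_diam
    ((Metric.isBounded_Icc u v).subset ha.2)).symm]
  exact ncard_mul_sInf_measureReal_le isCompact_Icc.measure_lt_top.ne (pairwiseDisjoint_fiber _ _)
    (fun a _ => hq.1.1 (measurableSet_singleton a)) fun a ha => ha.2

end GershoSequence

theorem gersho_stmt_15_general (μ : Measure ℝ) [IsProbabilityMeasure μ]
    (r : ℝ) (hr : 1 < r) (hmom : Integrable (fun x => |x| ^ r) μ)
    (h : ℝ → ℝ)
    (hμ : μ = volume.withDensity (fun x => ENNReal.ofReal (h x)))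
    (hwu : WeaklyUnimodal h)
    (q : ℕ → ℝ → ℝ) (hq : ∀ n : ℕ, 0 < n → IsGersho μ r n (q n))
    (u v : ℝ) (hI : Set.Icc u v ⊆ interior (msupp μ))
    (ε₃ : ℕ → ℝ)
    (hε₃ : ∀ n : ℕ, ε₃ n = sSup ((fun a : ℝ =>
      |(∫ x in (q n) ⁻¹' {a}, h x ^ (1 / (1 + r))) -
        Metric.diam ((q n) ⁻¹' {a}) * h a ^ (1 / (1 + r))|) '' Jcells q (Set.Icc u v) n)) :
    Tendsto (fun n : ℕ => ((Jcells q (Set.Icc u v) n).ncard : ℝ) * ε₃ n) atTop (nhds 0) ∧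
    Filter.limsup
      (fun n : ℕ => ε₃ n /
        sInf ((fun a : ℝ => Metric.diam ((q n) ⁻¹' {a})) '' Jcells q (Set.Icc u v) n))
      atTop = 0 := by
  have hr₀ : 0 < r := by linarith
  obtain rfl : ε₃ = _ := funext hε₃
  have : NullSingletonClass μ := hμ ▸ inferInstance
  have hcont : ContinuousOn h (Icc u v) := (hμ ▸ hwu.continuousOn_interior_msupp).mono hI
  obtain ⟨c₁, hc₁, hh₁⟩ := isCompact_Icc.exists_forall_le' hcont fun x hx =>
    hwu.pos_of_mem_interior_msupp (hμ ▸ hI hx)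
  obtain ⟨c₂, hc₂, hh₂⟩ : ∃ c₂ > 0, ∀ x ∈ Icc u v, h x ≤ c₂ :=
    let ⟨c, hc⟩ := isCompact_Icc.bddAbove_image hcont
    ⟨max c 1, by positivity, fun x hx => (hc (mem_image_of_mem h hx)).trans (le_max_left _ _)⟩
  have hsmall := fun δ (hδ : 0 < δ) =>
    eventually_forall_Jcells_diam_le hμ hq hr₀ hc₁ hh₁ hmom.lintegral_lt_top.ne hδ
  obtain ⟨hncard, hratio⟩ :=
    tendsto_ncard_mul_sSup_and_sSup_div_sInf (L := volume.real (Icc u v))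
    (Real.rpow_pos_of_pos (by positivity) _ : 0 < (c₂ / (c₁ / (2 * 4 ^ r))) ^ (1 + r)⁻¹)
    (fun _ _ _ => Metric.diam_nonneg) (fun _ _ _ => abs_nonneg _)
    ((eventually_gt_atTop 0).mono fun n hn a ha b hb =>
      Jcells_diam_le_mul_diam hμ (hq n hn) hr₀ hc₁ hc₂.le hh₁ hh₂ ha hb)
    (fun ε hε => eventually_forall_Jcells_abs_setIntegral_sub_le hq hr₀
      (g := fun x => h x ^ (1 / (1 + r))) (hcont.rpow_const fun _ _ => Or.inr (by positivity))
      hsmall hε)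
    ((eventually_gt_atTop 0).mono fun n hn => Jcells_ncard_mul_sInf_diam_le (hq n hn))
  exact ⟨hncard, hratio.limsup_eq⟩

theorem gersho_stmt_15 (μ : Measure ℝ) [IsProbabilityMeasure μ]
    (r : ℝ) (hr : 1 < r) (hmom : Integrable (fun x => |x| ^ r) μ)
    (h : ℝ → ℝ) (hh0 : ∀ x, 0 ≤ h x)
    (hμ : μ = volume.withDensity (fun x => ENNReal.ofReal (h x)))
    (hwu : WeaklyUnimodal h)
    (q : ℕ → ℝ → ℝ) (hq : ∀ n : ℕ, 0 < n → IsGersho μ r n (q n))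
    (u v : ℝ) (huv : u < v) (hI : Set.Icc u v ⊆ interior (msupp μ))
    (m : ℕ) (hm : ∀ n ≥ m, (Jcells q (Set.Icc u v) n).Nonempty)
    (ε₃ : ℕ → ℝ)
    (hε₃ : ∀ n : ℕ, ε₃ n = sSup ((fun a : ℝ =>
      |(∫ x in (q n) ⁻¹' {a}, h x ^ (1 / (1 + r))) -
        Metric.diam ((q n) ⁻¹' {a}) * h a ^ (1 / (1 + r))|) '' Jcells q (Set.Icc u v) n)) :
    Tendsto (fun n : ℕ => ((Jcells q (Set.Icc u v) n).ncard : ℝ) * ε₃ n) atTop (nhds 0) ∧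
    Filter.limsup
      (fun n : ℕ => ε₃ n /
        sInf ((fun a : ℝ => Metric.diam ((q n) ⁻¹' {a})) '' Jcells q (Set.Icc u v) n))
      atTop = 0 :=
  gersho_stmt_15_general μ r hr hmom h hμ hwu q hq u v hI ε₃ hε₃
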